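/- arXiv:2507.02344 — 2 statements merged into one kernel-verified Lean document; each statement's English description precedes it below -/
import Mathlib

section
/- For positive reals μ, v₁, v₂, γ, β and p ∈ [0,1], the 3×3 matrices F = [[0,0,pβ],[0,0,(1-p)β],[0,0,0]] and V = [[v₁+μ,0,0],[0,v₂+μ,0],[-v₁,-v₂,γ+μ]] satisfy: V is invertible and the spectral radius of F·V⁻¹ equals (p v₁/(v₁+μ) + (1-p) v₂/(v₂+μ)) · β/(γ+μ). -/
open Matrix

/-- Spectral radius of a real square matrix: the supremum of the norms of the
eigenvalues of its complexification. -/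
noncomputable def specRad {n : ℕ} (M : Matrix (Fin n) (Fin n) ℝ) : ℝ :=
  sSup ((fun z : ℂ => ‖z‖) '' spectrum ℂ (M.map (algebraMap ℝ ℂ)))

lemma spec_aux (A : Matrix (Fin 3) (Fin 3) ℂ) (t : ℂ)
    (h : ∀ z : ℂ, (Matrix.diagonal (fun _ => z) - A).det = z^2*(z-t)) :
    spectrum ℂ A = {0, t} := by
  ext z
  rw [spectrum.mem_iff, Matrix.isUnit_iff_isUnit_det]
  have he : algebraMap ℂ (Matrix (Fin 3) (Fin 3) ℂ) z = Matrix.diagonal (fun _ => z) := by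
    simp [Matrix.algebraMap_eq_diagonal]
  rw [he, h z, isUnit_iff_ne_zero, not_not, mul_eq_zero, pow_eq_zero_iff, sub_eq_zero]
  · simp [Set.mem_insert_iff]
  · norm_num

theorem stmt_2 (μ v₁ v₂ γ β p : ℝ) (hμ : 0 < μ) (hv₁ : 0 < v₁) (hv₂ : 0 < v₂)
    (hγ : 0 < γ) (hβ : 0 < β) (hp : p ∈ Set.Icc (0 : ℝ) 1) :
    IsUnit (!![v₁ + μ, 0, 0; 0, v₂ + μ, 0; -v₁, -v₂, γ + μ]) ∧
    specRad (!![0, 0, p * β; 0, 0, (1 - p) * β; 0, 0, 0] *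
        (!![v₁ + μ, 0, 0; 0, v₂ + μ, 0; -v₁, -v₂, γ + μ])⁻¹) =
      (p * v₁ / (v₁ + μ) + (1 - p) * v₂ / (v₂ + μ)) * (β / (γ + μ)) := by
  have ha : (0:ℝ) < v₁ + μ := by linarith
  have hb : (0:ℝ) < v₂ + μ := by linarith
  have hc : (0:ℝ) < γ + μ := by linarith
  have ha' := ha.ne'
  have hb' := hb.ne'
  have hc' := hc.ne'
  have hdet : (!![v₁ + μ, 0, 0; 0, v₂ + μ, 0; -v₁, -v₂, γ + μ]).det =
      (v₁ + μ) * ((v₂ + μ) * (γ + μ)) := by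
    simp [Matrix.det_fin_three]; ring
  have hU : IsUnit (!![v₁ + μ, 0, 0; 0, v₂ + μ, 0; -v₁, -v₂, γ + μ]) := by
    rw [Matrix.isUnit_iff_isUnit_det, hdet, isUnit_iff_ne_zero]
    positivity
  refine ⟨hU, ?_⟩
  -- explicit inverse
  have hinv : (!![v₁ + μ, 0, 0; 0, v₂ + μ, 0; -v₁, -v₂, γ + μ])⁻¹ =
      !![1/(v₁+μ), 0, 0; 0, 1/(v₂+μ), 0;
         v₁/((v₁+μ)*(γ+μ)), v₂/((v₂+μ)*(γ+μ)), 1/(γ+μ)] := by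
    apply Matrix.inv_eq_right_inv
    ext i j
    fin_cases i <;> fin_cases j <;>
      (simp [Matrix.mul_apply, Fin.sum_univ_three]; try field_simp; try ring)
  rw [hinv]
  set t : ℝ := (p * v₁ / (v₁ + μ) + (1 - p) * v₂ / (v₂ + μ)) * (β / (γ + μ)) with ht
  have ht0 : 0 ≤ t := by
    have h1 : 0 ≤ p := hp.1
    have h2 : 0 ≤ 1 - p := by linarith [hp.2]
    have : 0 ≤ p * v₁ / (v₁ + μ) + (1 - p) * v₂ / (v₂ + μ) := by positivity
    positivity
  have hM : !![0, 0, p * β; 0, 0, (1 - p) * β; 0, 0, 0] *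
      !![1/(v₁+μ), 0, 0; 0, 1/(v₂+μ), 0;
         v₁/((v₁+μ)*(γ+μ)), v₂/((v₂+μ)*(γ+μ)), 1/(γ+μ)] =
      !![p*β*v₁/((v₁+μ)*(γ+μ)), p*β*v₂/((v₂+μ)*(γ+μ)), p*β/(γ+μ);
         (1-p)*β*v₁/((v₁+μ)*(γ+μ)), (1-p)*β*v₂/((v₂+μ)*(γ+μ)), (1-p)*β/(γ+μ);
         0, 0, 0] := by
    ext i j
    fin_cases i <;> fin_cases j <;>
      (simp [Matrix.mul_apply, Fin.sum_univ_three]; try ring)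
  rw [hM]
  have hspec : spectrum ℂ ((!![p*β*v₁/((v₁+μ)*(γ+μ)), p*β*v₂/((v₂+μ)*(γ+μ)), p*β/(γ+μ);
         (1-p)*β*v₁/((v₁+μ)*(γ+μ)), (1-p)*β*v₂/((v₂+μ)*(γ+μ)), (1-p)*β/(γ+μ);
         0, 0, 0]).map (algebraMap ℝ ℂ)) = {0, (t:ℂ)} := by
    apply spec_aux
    intro z
    have htc : (t:ℂ) = (p:ℂ) * β * v₁ / ((v₁+μ)*(γ+μ)) + (1-(p:ℂ)) * β * v₂ / ((v₂+μ)*(γ+μ)) := by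
      rw [ht]
      push_cast
      have hac : ((v₁:ℂ)+μ) ≠ 0 := by exact_mod_cast (Complex.ofReal_ne_zero.mpr ha')
      have hbc : ((v₂:ℂ)+μ) ≠ 0 := by exact_mod_cast (Complex.ofReal_ne_zero.mpr hb')
      have hcc : ((γ:ℂ)+μ) ≠ 0 := by exact_mod_cast (Complex.ofReal_ne_zero.mpr hc')
      field_simp
    simp only [Matrix.det_fin_three, Matrix.sub_apply, Matrix.diagonal_apply,
      Matrix.map_apply]
    rw [htc]
    push_cast
    simp
    ring
  rw [specRad, hspec]
  have himg : (fun z : ℂ => ‖z‖) '' {0, (t:ℂ)} = {0, t} := by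
    rw [Set.image_insert_eq, Set.image_singleton]
    simp [Complex.norm_real, abs_of_nonneg ht0]
  rw [himg]
  rw [Set.insert_eq]
  rw [csSup_union (by simp) (by simp) ⟨t, by simp [upperBounds]⟩ (by simp)]
  simp [ht0]
end

section
/- Let σ, γₐ, γₛ, γₕ, δₛ, δₕ, φₛ be positive, r ∈ [0,1], βₐ, βₛ, βₕ ≥ 0, and S*, N* > 0 with S* ≤ N*. Define F as the 4×4 matrix whose only nonzero row is the first, equal to (0, βₐS*/N*, βₛS*/N*, βₕS*/N*), and V = [[σ,0,0,0],[-rσ,γₐ,0,0],[-(1-r)σ,0,φₛ+γₛ+δₛ,0],[0,0,-φₛ,γₕ+δₕ]]. Then V is invertible and the spectral radius of F·V⁻¹ equals (βₐ r/γₐ + βₛ(1-r)/(φₛ+γₛ+δₛ) + βₕ(1-r)φₛ/((φₛ+γₛ+δₛ)(γₕ+δₕ)))·(S*/N*). -/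
open Matrix

lemma spec_first_row (x a b c : ℂ) :
    spectrum ℂ (!![x,a,b,c;0,0,0,0;0,0,0,0;0,0,0,0] : Matrix (Fin 4) (Fin 4) ℂ)
      = {x, 0} := by
  ext z
  rw [spectrum.mem_iff]
  rw [Matrix.isUnit_iff_isUnit_det, isUnit_iff_ne_zero, not_ne_iff]
  have : (algebraMap ℂ (Matrix (Fin 4) (Fin 4) ℂ) z -
      !![x,a,b,c;0,0,0,0;0,0,0,0;0,0,0,0]).det = (z - x) * z * z * z := by
    have heq : algebraMap ℂ (Matrix (Fin 4) (Fin 4) ℂ) z -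
        !![x,a,b,c;0,0,0,0;0,0,0,0;0,0,0,0] =
        !![z-x,-a,-b,-c;0,z,0,0;0,0,z,0;0,0,0,z] := by
      ext i j
      fin_cases i <;> fin_cases j <;>
        simp [Matrix.algebraMap_matrix_apply, Matrix.vecHead, Matrix.vecTail]
    rw [heq, Matrix.det_of_upperTriangular]
    · simp [Fin.prod_univ_four]
    · intro i j hij
      fin_cases i <;> fin_cases j <;> simp_all [Matrix.vecHead, Matrix.vecTail]
  rw [this]
  constructor
  · intro h
    rcases mul_eq_zero.mp h with h | h
    · rcases mul_eq_zero.mp h with h | h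
      · rcases mul_eq_zero.mp h with h | h
        · left; linear_combination h
        · right; exact h
      · right; exact h
    · right; exact h
  · rintro (h | h) <;> subst h <;> ring

lemma specRad_first_row (x a b c : ℝ) (hx : 0 ≤ x) :
    specRad !![x,a,b,c;0,0,0,0;0,0,0,0;0,0,0,0] = x := by
  have hmap : (!![x,a,b,c;0,0,0,0;0,0,0,0;0,0,0,0] : Matrix (Fin 4) (Fin 4) ℝ).map
      (algebraMap ℝ ℂ) = !![(x:ℂ),a,b,c;0,0,0,0;0,0,0,0;0,0,0,0] := by
    ext i j
    fin_cases i <;> fin_cases j <;> simp [Matrix.vecHead, Matrix.vecTail]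
  rw [specRad, hmap, spec_first_row]
  have himg : (fun z : ℂ => ‖z‖) '' {(x:ℂ), 0} = {x, 0} := by
    rw [Set.image_pair]
    simp [Complex.norm_real, abs_of_nonneg hx]
  rw [himg, csSup_pair]
  exact sup_eq_left.mpr hx


set_option maxHeartbeats 1600000 in
theorem stmt_4 (σ γa γs γh δs δh φs r βa βs βh S N : ℝ)
    (hσ : 0 < σ) (hγa : 0 < γa) (hγs : 0 < γs) (hγh : 0 < γh)
    (hδs : 0 < δs) (hδh : 0 < δh) (hφs : 0 < φs)
    (hr : r ∈ Set.Icc (0 : ℝ) 1) (hβa : 0 ≤ βa) (hβs : 0 ≤ βs) (hβh : 0 ≤ βh)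
    (hS : 0 < S) (hN : 0 < N) (hSN : S ≤ N) :
    IsUnit (!![σ, 0, 0, 0;
               -r * σ, γa, 0, 0;
               -(1 - r) * σ, 0, φs + γs + δs, 0;
               0, 0, -φs, γh + δh]) ∧
    specRad (!![0, βa * S / N, βs * S / N, βh * S / N;
                0, 0, 0, 0;
                0, 0, 0, 0;
                0, 0, 0, 0] *
        (!![σ, 0, 0, 0;
            -r * σ, γa, 0, 0;
            -(1 - r) * σ, 0, φs + γs + δs, 0;
            0, 0, -φs, γh + δh])⁻¹) =
      (βa * r / γa + βs * (1 - r) / (φs + γs + δs) +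
        βh * (1 - r) * φs / ((φs + γs + δs) * (γh + δh))) * (S / N) := by
  obtain ⟨hr0, hr1⟩ := hr
  set A := φs + γs + δs with hA
  set B := γh + δh with hB
  have hApos : 0 < A := by positivity
  have hBpos : 0 < B := by positivity
  set V : Matrix (Fin 4) (Fin 4) ℝ :=
    !![σ, 0, 0, 0;
       -r * σ, γa, 0, 0;
       -(1 - r) * σ, 0, A, 0;
       0, 0, -φs, B] with hV
  set W : Matrix (Fin 4) (Fin 4) ℝ :=
    !![1/σ, 0, 0, 0;
       r/γa, 1/γa, 0, 0;
       (1-r)/A, 0, 1/A, 0;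
       (1-r)*φs/(A*B), 0, φs/(A*B), 1/B] with hW
  have hVW : V * W = 1 := by
    ext i j
    fin_cases i <;> fin_cases j <;>
      simp [hV, hW, Matrix.mul_apply, Fin.sum_univ_four, Matrix.one_apply,
          Matrix.vecHead, Matrix.vecTail] <;>
      field_simp <;> ring
  have hUnit : IsUnit V :=
    (Matrix.isUnit_iff_isUnit_det V).mpr (Matrix.isUnit_det_of_right_inverse hVW)
  have hVinv : V⁻¹ = W := Matrix.inv_eq_right_inv hVW
  refine ⟨hUnit, ?_⟩
  rw [hVinv]
  have hFW : (!![0, βa * S / N, βs * S / N, βh * S / N;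
                0, 0, 0, 0; 0, 0, 0, 0; 0, 0, 0, 0] : Matrix (Fin 4) (Fin 4) ℝ) * W =
      !![(βa * r / γa + βs * (1 - r) / A + βh * (1 - r) * φs / (A * B)) * (S / N),
         βa * S / N / γa, βs * S / N / A + βh * S / N * φs / (A * B), βh * S / N / B;
         0, 0, 0, 0; 0, 0, 0, 0; 0, 0, 0, 0] := by
    ext i j
    fin_cases i <;> fin_cases j <;>
      simp [hW, Matrix.mul_apply, Fin.sum_univ_four, Matrix.vecHead, Matrix.vecTail] <;>
      field_simp <;> ring
  rw [hFW]
  have h1r : 0 ≤ 1 - r := by linarith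
  refine specRad_first_row _ _ _ _ (mul_nonneg ?_ (by positivity))
  have t1 : 0 ≤ βa * r / γa := by positivity
  have t2 : 0 ≤ βs * (1 - r) / A := div_nonneg (mul_nonneg hβs h1r) hApos.le
  have t3 : 0 ≤ βh * (1 - r) * φs / (A * B) :=
    div_nonneg (mul_nonneg (mul_nonneg hβh h1r) hφs.le) (by positivity)
  linarith
end
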